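/- arXiv:1209.1232 — 3 statements merged into one kernel-verified Lean document; each statement's English description precedes it below -/
import Mathlib

section
/- Let u be a positive continuous function on the punctured ball B_R \ {0} with limsup_{|x|→0} u(x) = ∞, and suppose u satisfies the maximum principle in annuli: if u ≤ M on the boundary of an annulus B_r \ B_{r'} (0 < r' < r < R) then u ≤ M in the annulus. Define M(r) := max_{|x|=r} u(x). Then there exists a sequence R_k → 0 of positive reals such that M(R_k) < M(r) for all r ∈ (0, R_k). -/
open MeasureTheory

theorem stmt_2 {N : ℕ} (hN : 1 ≤ N) (R : ℝ) (hR : 0 < R)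
    (u : EuclideanSpace ℝ (Fin N) → ℝ)
    (hu : ContinuousOn u (Metric.ball (0:EuclideanSpace ℝ (Fin N)) R \ {0}))
    (hpos : ∀ x ∈ Metric.ball (0:EuclideanSpace ℝ (Fin N)) R \ {0}, 0 < u x)
    (hsing : ∀ C : ℝ, ∀ ε > 0, ∃ x : EuclideanSpace ℝ (Fin N), x ≠ 0 ∧ ‖x‖ < ε ∧ C < u x)
    (hmax : ∀ r' r M' : ℝ, 0 < r' → r' < r → r < R →
      (∀ x : EuclideanSpace ℝ (Fin N), (‖x‖ = r' ∨ ‖x‖ = r) → u x ≤ M') →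
      ∀ x : EuclideanSpace ℝ (Fin N), r' ≤ ‖x‖ → ‖x‖ ≤ r → u x ≤ M')
    (M : ℝ → ℝ)
    (hM : ∀ r ∈ Set.Ioo (0:ℝ) R, IsGreatest (u '' {x | ‖x‖ = r}) (M r)) :
    ∃ Rk : ℕ → ℝ, (∀ k, 0 < Rk k ∧ Rk k < R) ∧
      Filter.Tendsto Rk Filter.atTop (nhds 0) ∧
      ∀ k, ∀ r ∈ Set.Ioo 0 (Rk k), M (Rk k) < M r := by
  -- every value on the sphere of radius s is at most M s
  have sphere_le : ∀ s, 0 < s → s < R → ∀ x : EuclideanSpace ℝ (Fin N), ‖x‖ = s → u x ≤ M s := by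
    intro s h1 h2 x hx
    exact (hM s ⟨h1, h2⟩).2 ⟨x, hx, rfl⟩
  have exists_max : ∀ s, 0 < s → s < R →
      ∃ x : EuclideanSpace ℝ (Fin N), ‖x‖ = s ∧ u x = M s := by
    intro s h1 h2
    obtain ⟨x, hx, hux⟩ := (hM s ⟨h1, h2⟩).1
    exact ⟨x, hx, hux⟩
  -- quasiconvexity of M
  have quasi : ∀ r' r s : ℝ, 0 < r' → r' ≤ s → s ≤ r → r < R →
      M s ≤ max (M r') (M r) := by
    intro r' r s h1 h2 h3 h4
    rcases lt_or_eq_of_le (h2.trans h3) with hlt | heq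
    · obtain ⟨x, hx, hux⟩ := exists_max s (lt_of_lt_of_le h1 h2) (lt_of_le_of_lt h3 h4)
      have hb : ∀ y : EuclideanSpace ℝ (Fin N), (‖y‖ = r' ∨ ‖y‖ = r) →
          u y ≤ max (M r') (M r) := by
        intro y hy
        rcases hy with h | h
        · exact (sphere_le r' h1 (lt_trans hlt h4) y h).trans (le_max_left _ _)
        · exact (sphere_le r (lt_trans h1 hlt) h4 y h).trans (le_max_right _ _)
      have := hmax r' r (max (M r') (M r)) h1 hlt h4 hb x (by rw [hx]; exact h2)
        (by rw [hx]; exact h3)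
      rw [hux] at this
      exact this
    · have hs : s = r' := le_antisymm (heq ▸ h3) h2
      rw [hs]; exact le_max_left _ _
  -- blow-up of M near 0
  have blow : ∀ C : ℝ, ∃ δ, 0 < δ ∧ δ < R ∧ ∀ r, 0 < r → r < δ → C < M r := by
    intro C
    by_contra h
    push_neg at h
    obtain ⟨r1, hr1pos, hr1lt, hMr1⟩ := h (R/2) (by positivity) (by linarith)
    obtain ⟨x, hx0, hxlt, hxu⟩ := hsing (max C (M r1)) r1 hr1pos
    have htpos : 0 < ‖x‖ := norm_pos_iff.mpr hx0
    obtain ⟨r2, hr2pos, hr2lt, hMr2⟩ := h ‖x‖ htpos (by linarith)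
    have hq := quasi r2 r1 ‖x‖ hr2pos hr2lt.le hxlt.le (by linarith)
    have hut : u x ≤ M ‖x‖ := sphere_le ‖x‖ htpos (by linarith) x rfl
    have hle : u x ≤ max C (M r1) := hut.trans (hq.trans (max_le_max hMr2 le_rfl))
    exact absurd hxu hle.not_gt
  -- continuity of M on compact subintervals
  have contM : ∀ α β : ℝ, 0 < α → β < R → ContinuousOn M (Set.Icc α β) := by
    intro α β hα hβ
    set A : Set (EuclideanSpace ℝ (Fin N)) := {x | α ≤ ‖x‖} ∩ Metric.closedBall 0 β with hA
    have hAsub : A ⊆ Metric.ball 0 R \ {0} := by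
      rintro x ⟨h1, h2⟩
      rw [Metric.mem_closedBall, dist_zero_right] at h2
      constructor
      · rw [Metric.mem_ball, dist_zero_right]; exact lt_of_le_of_lt h2 hβ
      · simp only [Set.mem_singleton_iff]
        intro h
        rw [Set.mem_setOf_eq, h, norm_zero] at h1
        linarith
    have hAcomp : IsCompact A :=
      (isCompact_closedBall _ _).inter_left (isClosed_le continuous_const continuous_norm)
    have huc : UniformContinuousOn u A :=
      hAcomp.uniformContinuousOn_of_continuous (hu.mono hAsub)
    rw [Metric.uniformContinuousOn_iff] at huc
    rw [Metric.continuousOn_iff]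
    intro b hb ε hε
    obtain ⟨η, hη, hcu⟩ := huc ε hε
    have key : ∀ r ∈ Set.Icc α β, ∀ r' ∈ Set.Icc α β, dist r r' < η → M r < M r' + ε := by
      intro r hr r' hr' hd
      have hrpos : 0 < r := lt_of_lt_of_le hα hr.1
      have hr'pos : 0 < r' := lt_of_lt_of_le hα hr'.1
      obtain ⟨x, hx, hux⟩ := exists_max r hrpos (lt_of_le_of_lt hr.2 hβ)
      set x' : EuclideanSpace ℝ (Fin N) := (r'/r) • x with hx'
      have hnx' : ‖x'‖ = r' := by
        rw [hx', norm_smul, hx, Real.norm_eq_abs, abs_of_pos (by positivity)]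
        field_simp
      have hxA : x ∈ A := by
        constructor
        · rw [Set.mem_setOf_eq, hx]; exact hr.1
        · rw [Metric.mem_closedBall, dist_zero_right, hx]; exact hr.2
      have hx'A : x' ∈ A := by
        constructor
        · rw [Set.mem_setOf_eq, hnx']; exact hr'.1
        · rw [Metric.mem_closedBall, dist_zero_right, hnx']; exact hr'.2
      have hdist : dist x x' = dist r r' := by
        rw [dist_eq_norm, hx']
        have : x - (r'/r) • x = (1 - r'/r) • x := by
          rw [sub_smul, one_smul]
        rw [this, norm_smul, hx, Real.norm_eq_abs, Real.dist_eq]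
        rw [show (1 - r'/r) = (r - r')/r by field_simp]
        rw [abs_div, abs_of_pos hrpos]
        field_simp
      have hud : dist (u x) (u x') < ε := hcu x hxA x' hx'A (by rw [hdist]; exact hd)
      have : u x - u x' < ε := by
        have := abs_sub_lt_iff.mp (by rw [← Real.dist_eq]; exact hud)
        exact this.1
      have hux' : u x' ≤ M r' := sphere_le r' hr'pos (lt_of_le_of_lt hr'.2 hβ) x' hnx'
      rw [← hux]
      linarith
    refine ⟨η, hη, fun a ha hd => ?_⟩
    have h1 := key a ha b hb hd
    have h2 := key b hb a ha (by rwa [dist_comm])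
    rw [Real.dist_eq, abs_sub_lt_iff]
    constructor <;> linarith
  -- main construction: arbitrarily small "good" radii
  have good : ∀ a : ℝ, 0 < a → a < R →
      ∃ ρ, 0 < ρ ∧ ρ ≤ a ∧ ∀ s, 0 < s → s < ρ → M ρ < M s := by
    intro a ha haR
    obtain ⟨δ0, hδ0, _, hδblow⟩ := blow (M a)
    set δ := min δ0 a with hδdef
    have hδpos : 0 < δ := lt_min hδ0 ha
    have hδa : δ ≤ a := min_le_right _ _
    have hδb : ∀ r, 0 < r → r < δ → M a < M r := fun r h1 h2 =>
      hδblow r h1 (lt_of_lt_of_le h2 (min_le_left _ _))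
    have hKne : (Set.Icc (δ/2) a).Nonempty := ⟨a, by constructor <;> linarith⟩
    have hKcont : ContinuousOn M (Set.Icc (δ/2) a) := contM (δ/2) a (by positivity) haR
    obtain ⟨m0, hm0K, hm0⟩ := isCompact_Icc.exists_isMinOn hKne hKcont
    rw [isMinOn_iff] at hm0
    set S := Set.Icc (δ/2) a ∩ M ⁻¹' {M m0} with hS
    have hSclosed : IsClosed S :=
      hKcont.preimage_isClosed_of_isClosed isClosed_Icc isClosed_singleton
    have hSne : S.Nonempty := ⟨m0, hm0K, rfl⟩
    have hSbdd : BddBelow S := ⟨δ/2, fun x hx => hx.1.1⟩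
    have hρS : sInf S ∈ S := hSclosed.csInf_mem hSne hSbdd
    set ρ := sInf S with hρ
    have hρK : ρ ∈ Set.Icc (δ/2) a := hρS.1
    have hρval : M ρ = M m0 := hρS.2
    refine ⟨ρ, by linarith [hρK.1], hρK.2, ?_⟩
    intro s hs hsρ
    rw [hρval]
    by_cases hsK : δ/2 ≤ s
    · have hsmem : s ∈ Set.Icc (δ/2) a := ⟨hsK, le_of_lt (lt_of_lt_of_le hsρ hρK.2)⟩
      rcases lt_or_eq_of_le (hm0 s hsmem) with h | h
      · exact h
      · exfalso
        have : s ∈ S := ⟨hsmem, h.symm⟩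
        exact absurd (csInf_le hSbdd this) (not_le.mpr hsρ)
    · push_neg at hsK
      have h1 : M a < M s := hδb s hs (by linarith)
      have h2 : M m0 ≤ M a := hm0 a ⟨by linarith, le_refl a⟩
      linarith
  -- assemble the sequence
  have hmin : ∀ k : ℕ, 0 < min (R/2) (1/((k:ℝ)+1)) ∧ min (R/2) (1/((k:ℝ)+1)) < R := by
    intro k
    constructor
    · apply lt_min (by positivity)
      positivity
    · exact lt_of_le_of_lt (min_le_left _ _) (by linarith)
  choose ρfun hρ1 hρ2 hρ3 using fun k : ℕ =>
    good (min (R/2) (1/((k:ℝ)+1))) (hmin k).1 (hmin k).2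
  refine ⟨ρfun, fun k => ⟨hρ1 k, lt_of_le_of_lt (hρ2 k) (hmin k).2⟩, ?_, ?_⟩
  · apply squeeze_zero (fun k => (hρ1 k).le)
      (fun k => (hρ2 k).trans (min_le_right _ _))
    exact tendsto_one_div_add_atTop_nhds_zero_nat
  · rintro k r ⟨h1, h2⟩
    exact hρ3 k r h1 h2
end

section
/- Let N ≥ 3, k ∈ ℝ, and a_{ij}(x) = (1+x_i²)^k δ_{ij}. Define Ψ(x) = |x|² Σ_{i=1}^N (1+x_i²)^k / Σ_{i=1}^N x_i²(1+x_i²)^k. Then there exist C > 0 and R > 0 such that Ψ(x) ≥ N − C|x|² for all x ∈ B_R \ {0}. In particular, if k ≤ 0 then Ψ(x) ≥ N for all x ≠ 0 (by the Chebyshev sum inequality), and if k > 0 then Ψ(x) ≥ N(1+|x|²)^{−k} ≥ N − C|x|². -/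
private lemma bern_aux {k t : ℝ} (hk : 0 < k) (ht : 0 ≤ t) :
    (1 - k * t) * (1 + t) ^ k ≤ 1 := by
  rcases le_or_gt (1 - k * t) 0 with h | h
  · have : 0 ≤ (1 + t) ^ k := Real.rpow_nonneg (by linarith) k
    nlinarith
  · have h1t : (0:ℝ) < 1 + t := by linarith
    have hlog1 : Real.log (1 - k * t) ≤ -(k * t) := by
      have := Real.log_le_sub_one_of_pos h
      linarith
    have hlog2 : Real.log (1 + t) ≤ t := by
      have := Real.log_le_sub_one_of_pos h1t
      linarith
    calc (1 - k * t) * (1 + t) ^ k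
        = Real.exp (Real.log (1 - k * t)) * Real.exp (k * Real.log (1 + t)) := by
          rw [Real.exp_log h, Real.rpow_def_of_pos h1t, mul_comm (Real.log (1+t)) k]
      _ = Real.exp (Real.log (1 - k * t) + k * Real.log (1 + t)) := by
          rw [Real.exp_add]
      _ ≤ Real.exp 0 := by
          apply Real.exp_le_exp.mpr
          have : k * Real.log (1 + t) ≤ k * t :=
            mul_le_mul_of_nonneg_left hlog2 hk.le
          linarith
      _ = 1 := Real.exp_zero

theorem stmt_17 {N : ℕ} (hN : 3 ≤ N) (k : ℝ)
    (Ψ : EuclideanSpace ℝ (Fin N) → ℝ)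
    (hΨ : ∀ x : EuclideanSpace ℝ (Fin N),
      Ψ x = ‖x‖^2 * (∑ i, (1 + (x i)^2) ^ k) / ∑ i, (x i)^2 * (1 + (x i)^2) ^ k) :
    (∃ C > (0:ℝ), ∃ R > (0:ℝ), ∀ x : EuclideanSpace ℝ (Fin N),
      x ≠ 0 → ‖x‖ < R → (N:ℝ) - C * ‖x‖^2 ≤ Ψ x) ∧
    (k ≤ 0 → ∀ x : EuclideanSpace ℝ (Fin N), x ≠ 0 → (N:ℝ) ≤ Ψ x) := by
  -- common facts
  have key : ∀ x : EuclideanSpace ℝ (Fin N), x ≠ 0 →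
      (k ≤ 0 → (N:ℝ) ≤ Ψ x) ∧ (0 < k → (N:ℝ) - (N:ℝ) * k * ‖x‖^2 ≤ Ψ x) := by
    intro x hx
    set t : ℝ := ‖x‖^2 with htdef
    have hnorm : ∑ i, (x i)^2 = t := by
      rw [htdef, EuclideanSpace.norm_eq, Real.sq_sqrt]
      · simp [sq_abs]
      · positivity
    have hbase : ∀ i : Fin N, (0:ℝ) < 1 + (x i)^2 := fun i => by positivity
    have hTnn : ∀ i : Fin N, (0:ℝ) ≤ (x i)^2 * (1 + (x i)^2) ^ k := fun i => by
      have := (Real.rpow_pos_of_pos (hbase i) k).le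
      positivity
    obtain ⟨i₀, hi₀⟩ : ∃ i, x i ≠ 0 := by
      by_contra h
      push_neg at h
      exact hx (by ext i; exact h i)
    have hT : 0 < ∑ i, (x i)^2 * (1 + (x i)^2) ^ k := by
      apply Finset.sum_pos' (fun i _ => hTnn i)
      exact ⟨i₀, Finset.mem_univ _, by
        have h1 : (0:ℝ) < (x i₀)^2 := by positivity
        have h2 := Real.rpow_pos_of_pos (hbase i₀) k
        positivity⟩
    have ht0 : (0:ℝ) ≤ t := by positivity
    constructor
    · -- k ≤ 0 : Chebyshev
      intro hk
      have hanti : Antivary (fun i : Fin N => (x i)^2)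
          (fun i : Fin N => (1 + (x i)^2) ^ k) := by
        intro i j hij
        by_contra hc
        push_neg at hc
        have : (1 + (x j)^2) ^ k ≤ (1 + (x i)^2) ^ k :=
          Real.rpow_le_rpow_of_nonpos (hbase i) (by nlinarith) hk
        simp only at hij
        linarith
      have hcheb := hanti.card_mul_sum_le_sum_mul_sum
      simp only [Fintype.card_fin] at hcheb
      rw [hΨ x, le_div_iff₀ hT]
      calc (N:ℝ) * ∑ i, (x i)^2 * (1 + (x i)^2) ^ k
          ≤ (∑ i, (x i)^2) * ∑ i, (1 + (x i)^2) ^ k := hcheb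
        _ = ‖x‖^2 * ∑ i, (1 + (x i)^2) ^ k := by rw [hnorm]
    · -- 0 < k
      intro hk
      have hS : (N:ℝ) ≤ ∑ i, (1 + (x i)^2) ^ k := by
        calc (N:ℝ) = ∑ _i : Fin N, (1:ℝ) := by simp
          _ ≤ ∑ i, (1 + (x i)^2) ^ k := by
              apply Finset.sum_le_sum
              intro i _
              have h1 : (1:ℝ) ^ k ≤ (1 + (x i)^2) ^ k :=
                Real.rpow_le_rpow zero_le_one (by nlinarith [sq_nonneg (x i)]) hk.le
              simpa using h1
      have hxi : ∀ i : Fin N, (x i)^2 ≤ t := by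
        intro i
        rw [← hnorm]
        exact Finset.single_le_sum (fun j _ => sq_nonneg (x j)) (Finset.mem_univ i)
      have hTle : (∑ i, (x i)^2 * (1 + (x i)^2) ^ k) ≤ t * (1 + t) ^ k := by
        calc (∑ i, (x i)^2 * (1 + (x i)^2) ^ k)
            ≤ ∑ i, (x i)^2 * (1 + t) ^ k := by
              apply Finset.sum_le_sum
              intro i _
              exact mul_le_mul_of_nonneg_left
                (Real.rpow_le_rpow (hbase i).le (by linarith [hxi i]) hk.le)
                (sq_nonneg _)
          _ = (∑ i, (x i)^2) * (1 + t) ^ k := by rw [← Finset.sum_mul]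
          _ = t * (1 + t) ^ k := by rw [hnorm]
      have hbern := bern_aux hk ht0
      have hrpos : (0:ℝ) < (1 + t) ^ k := Real.rpow_pos_of_pos (by linarith) k
      rw [hΨ x, le_div_iff₀ hT]
      rcases le_or_gt (1 - k * t) 0 with hc | hc
      · have hNt : (N:ℝ) - (N:ℝ) * k * t ≤ 0 := by nlinarith [show (0:ℝ) < N by exact_mod_cast (show 0 < N by omega)]
        have : (0:ℝ) ≤ ‖x‖^2 * ∑ i, (1 + (x i)^2) ^ k := by
          have hN0 : (0:ℝ) ≤ (N:ℝ) := Nat.cast_nonneg N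
          nlinarith
        nlinarith
      · have hN0 : (0:ℝ) ≤ (N:ℝ) := Nat.cast_nonneg N
        calc ((N:ℝ) - (N:ℝ) * k * t) * ∑ i, (x i)^2 * (1 + (x i)^2) ^ k
            ≤ ((N:ℝ) * (1 - k * t)) * (t * (1 + t) ^ k) := by
              rw [show (N:ℝ) - (N:ℝ) * k * t = (N:ℝ) * (1 - k * t) by ring]
              exact mul_le_mul_of_nonneg_left hTle (by nlinarith)
          _ = ((N:ℝ) * t) * ((1 - k * t) * (1 + t) ^ k) := by ring
          _ ≤ ((N:ℝ) * t) * 1 := mul_le_mul_of_nonneg_left hbern (by positivity)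
          _ = t * (N:ℝ) := by ring
          _ ≤ t * ∑ i, (1 + (x i)^2) ^ k := mul_le_mul_of_nonneg_left hS ht0
          _ = ‖x‖^2 * ∑ i, (1 + (x i)^2) ^ k := rfl
  constructor
  · refine ⟨(N:ℝ) * |k| + 1, by positivity, 1, one_pos, fun x hx _ => ?_⟩
    have hC : (N:ℝ) - ((N:ℝ) * |k| + 1) * ‖x‖^2 ≤ (N:ℝ) - (N:ℝ) * k * ‖x‖^2 := by
      have h1 : (N:ℝ) * k ≤ (N:ℝ) * |k| := mul_le_mul_of_nonneg_left (le_abs_self k) (Nat.cast_nonneg N)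
      nlinarith [sq_nonneg ‖x‖]
    rcases le_or_gt k 0 with hk | hk
    · have := (key x hx).1 hk
      have : (N:ℝ) - ((N:ℝ) * |k| + 1) * ‖x‖^2 ≤ (N:ℝ) := by
        have h2 : (0:ℝ) ≤ ((N:ℝ) * |k| + 1) * ‖x‖^2 := by positivity
        linarith
      linarith [(key x hx).1 hk]
    · exact hC.trans ((key x hx).2 hk)
  · intro hk x hx
    exact (key x hx).1 hk
end

section
/- Let N ≥ 3, β ∈ ℝ, 1 < p. The inequality Δu + β (x/|x|²)·∇u ≥ u^p admits a positive radial singular solution u(x) = c|x|^{−α} in a punctured ball (for suitable c, α > 0) if and only if either β ≤ 2−N, or β > 2−N and p < (N+β)/(N+β−2). -/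
open Real

section aux
variable {N : ℕ}

private lemma norm_rpow_eq' (α : ℝ) (z : EuclideanSpace ℝ (Fin N)) :
    ‖z‖ ^ (-α) = ((‖z‖^2 : ℝ)) ^ (-(α/2)) := by
  rw [← Real.rpow_natCast ‖z‖ 2, ← Real.rpow_mul (norm_nonneg z)]
  norm_num
  congr 1; ring

private lemma hasFDeriv_f' (c α : ℝ) {x : EuclideanSpace ℝ (Fin N)} (hx : x ≠ 0) :
    HasFDerivAt (fun z : EuclideanSpace ℝ (Fin N) => c * ‖z‖ ^ (-α))
      (c • ((-(α/2) * (‖x‖^2 : ℝ) ^ (-(α/2) - 1)) • (2 • (innerSL ℝ x)))) x := by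
  have hq : (0:ℝ) < ‖x‖^2 := pow_pos (norm_pos_iff.mpr hx) 2
  have : (fun z : EuclideanSpace ℝ (Fin N) => c * ‖z‖ ^ (-α))
      = fun z : EuclideanSpace ℝ (Fin N) => c * ((‖z‖^2 : ℝ) ^ (-(α/2))) := by
    funext z; rw [norm_rpow_eq']
  rw [this]
  exact (((hasStrictFDerivAt_norm_sq x).hasFDerivAt).rpow_const (Or.inl hq.ne')).const_mul c

private lemma fderiv_eval' (c α : ℝ) {x : EuclideanSpace ℝ (Fin N)} (hx : x ≠ 0) (i : Fin N) :
    fderiv ℝ (fun z : EuclideanSpace ℝ (Fin N) => c * ‖z‖ ^ (-α)) x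
      (EuclideanSpace.single i (1:ℝ)) =
      -(c * α) * (‖x‖^2 : ℝ) ^ (-(α/2) - 1) * x i := by
  rw [(hasFDeriv_f' c α hx).fderiv]
  simp [EuclideanSpace.inner_single_right]
  ring

private lemma snd_eval' (c α : ℝ) {x : EuclideanSpace ℝ (Fin N)} (hx : x ≠ 0) (i : Fin N) :
    fderiv ℝ (fun y => fderiv ℝ (fun z : EuclideanSpace ℝ (Fin N) => c * ‖z‖ ^ (-α)) y
        (EuclideanSpace.single i (1:ℝ))) x (EuclideanSpace.single i (1:ℝ)) =
      -(c*α) * ((‖x‖^2:ℝ) ^ (-(α/2) - 1)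
        + (2 * (-(α/2) - 1) * (‖x‖^2:ℝ) ^ (-(α/2) - 1 - 1)) * (x i * x i)) := by
  have hq : (0:ℝ) < ‖x‖^2 := pow_pos (norm_pos_iff.mpr hx) 2
  have hproj : HasFDerivAt (fun y : EuclideanSpace ℝ (Fin N) => y i)
      (EuclideanSpace.proj (𝕜 := ℝ) i) x := (EuclideanSpace.proj (𝕜 := ℝ) i).hasFDerivAt
  have hg : HasFDerivAt (fun y : EuclideanSpace ℝ (Fin N) =>
        -(c*α) * ((‖y‖^2:ℝ) ^ (-(α/2) - 1) * y i))
      ((-(c*α)) • (((‖x‖^2:ℝ) ^ (-(α/2) - 1)) • (EuclideanSpace.proj (𝕜 := ℝ) i)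
        + (x i) • (((-(α/2) - 1) * (‖x‖^2:ℝ) ^ (-(α/2) - 1 - 1)) • (2 • innerSL ℝ x)))) x :=
    ((((hasStrictFDerivAt_norm_sq x).hasFDerivAt).rpow_const (Or.inl hq.ne')).mul
      hproj).const_mul _
  have heq : (fun y : EuclideanSpace ℝ (Fin N) =>
        fderiv ℝ (fun z : EuclideanSpace ℝ (Fin N) => c * ‖z‖ ^ (-α)) y
          (EuclideanSpace.single i (1:ℝ)))
      =ᶠ[nhds x] (fun y : EuclideanSpace ℝ (Fin N) =>
        -(c*α) * ((‖y‖^2:ℝ) ^ (-(α/2) - 1) * y i)) := by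
    filter_upwards [isOpen_compl_singleton.mem_nhds
      (by simpa using hx : x ∈ ({0}ᶜ : Set (EuclideanSpace ℝ (Fin N))))] with y hy
    rw [fderiv_eval' c α (by simpa using hy) i]; ring
  rw [heq.fderiv_eq, hg.fderiv]
  simp [EuclideanSpace.inner_single_right]
  ring

private lemma sum_sq' (x : EuclideanSpace ℝ (Fin N)) : ∑ i, x i * x i = (‖x‖^2 : ℝ) := by
  rw [EuclideanSpace.norm_eq, Real.sq_sqrt (by positivity)]
  simp [Real.norm_eq_abs, sq_abs, sq]

private lemma reduce' (β c α : ℝ) {x : EuclideanSpace ℝ (Fin N)} (hx : x ≠ 0) :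
    (∑ i, fderiv ℝ (fun y =>
        fderiv ℝ (fun z : EuclideanSpace ℝ (Fin N) => c * ‖z‖ ^ (-α)) y
          (EuclideanSpace.single i (1:ℝ))) x (EuclideanSpace.single i (1:ℝ)))
      + β * ∑ i, (x i / ‖x‖^2) *
          fderiv ℝ (fun z : EuclideanSpace ℝ (Fin N) => c * ‖z‖ ^ (-α)) x
            (EuclideanSpace.single i (1:ℝ))
    = c * (α * (α + 2 - N - β)) * ((‖x‖^2 : ℝ) ^ (-(α/2) - 1)) := by
  have hq : (0:ℝ) < ‖x‖^2 := pow_pos (norm_pos_iff.mpr hx) 2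
  have hstep : (‖x‖^2:ℝ) ^ (-(α/2) - 1 - 1) * (‖x‖^2:ℝ) = (‖x‖^2:ℝ) ^ (-(α/2) - 1) := by
    rw [← Real.rpow_add_one hq.ne' (-(α/2) - 1 - 1)]
    norm_num
  have h1 : (∑ i, fderiv ℝ (fun y =>
        fderiv ℝ (fun z : EuclideanSpace ℝ (Fin N) => c * ‖z‖ ^ (-α)) y
          (EuclideanSpace.single i (1:ℝ))) x (EuclideanSpace.single i (1:ℝ)))
      = -(c*α) * ((N:ℝ) * (‖x‖^2:ℝ) ^ (-(α/2) - 1)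
        + (2 * (-(α/2) - 1) * (‖x‖^2:ℝ) ^ (-(α/2) - 1 - 1)) * (‖x‖^2:ℝ)) := by
    rw [Finset.sum_congr rfl fun i _ => snd_eval' c α hx i, ← Finset.mul_sum,
      Finset.sum_add_distrib, Finset.sum_const, ← Finset.mul_sum, sum_sq']
    simp [Finset.card_univ, mul_comm, nsmul_eq_mul]
  have h2 : (∑ i, (x i / ‖x‖^2) *
        fderiv ℝ (fun z : EuclideanSpace ℝ (Fin N) => c * ‖z‖ ^ (-α)) x
          (EuclideanSpace.single i (1:ℝ)))
      = -(c*α) * (‖x‖^2:ℝ) ^ (-(α/2) - 1) := by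
    have hterm : ∀ i : Fin N, (x i / ‖x‖^2) *
        fderiv ℝ (fun z : EuclideanSpace ℝ (Fin N) => c * ‖z‖ ^ (-α)) x
          (EuclideanSpace.single i (1:ℝ))
        = (-(c*α) * (‖x‖^2:ℝ) ^ (-(α/2) - 1) / (‖x‖^2:ℝ)) * (x i * x i) := fun i => by
      rw [fderiv_eval' c α hx i]; ring
    rw [Finset.sum_congr rfl fun i _ => hterm i, ← Finset.mul_sum, sum_sq']
    field_simp
  rw [h1, h2]
  linear_combination (-(c*α)*(2*(-(α/2)-1))) * hstep

private lemma lhs_eq' (c α p : ℝ) (hc : 0 < c) {x : EuclideanSpace ℝ (Fin N)} (hx : x ≠ 0) :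
    (c * ‖x‖ ^ (-α)) ^ p = c ^ p * ((‖x‖^2:ℝ) ^ (-(α/2) * p)) := by
  have hq : (0:ℝ) < ‖x‖^2 := pow_pos (norm_pos_iff.mpr hx) 2
  rw [norm_rpow_eq', Real.mul_rpow hc.le (Real.rpow_nonneg hq.le _), ← Real.rpow_mul hq.le]

private lemma cond_iff' {N : ℕ} (β p : ℝ) (hp : 1 < p) :
    (β ≤ 2 - (N:ℝ) ∨ ((2:ℝ) - (N:ℝ) < β ∧ p < ((N:ℝ) + β) / ((N:ℝ) + β - 2)))
    ↔ ((N:ℝ) + β - 2) * (p - 1) < 2 := by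
  constructor
  · rintro (h | ⟨h1, h2⟩)
    · nlinarith
    · have hs : (0:ℝ) < (N:ℝ) + β - 2 := by linarith
      rw [lt_div_iff₀ hs] at h2
      nlinarith
  · intro h
    by_cases hb : β ≤ 2 - (N:ℝ)
    · exact Or.inl hb
    · push_neg at hb
      refine Or.inr ⟨hb, ?_⟩
      have hs : (0:ℝ) < (N:ℝ) + β - 2 := by linarith
      rw [lt_div_iff₀ hs]
      nlinarith

end aux

theorem stmt_18 {N : ℕ} (hN : 3 ≤ N) (β p : ℝ) (hp : 1 < p) :
    (∃ c > (0:ℝ), ∃ α > (0:ℝ), ∃ R > (0:ℝ),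
      ∀ x : EuclideanSpace ℝ (Fin N), x ≠ 0 → ‖x‖ < R →
        (c * ‖x‖ ^ (-α)) ^ p ≤
          (∑ i, fderiv ℝ (fun y =>
              fderiv ℝ (fun z : EuclideanSpace ℝ (Fin N) => c * ‖z‖ ^ (-α)) y
                (EuclideanSpace.single i (1:ℝ))) x (EuclideanSpace.single i (1:ℝ)))
          + β * ∑ i, (x i / ‖x‖^2) *
              fderiv ℝ (fun z : EuclideanSpace ℝ (Fin N) => c * ‖z‖ ^ (-α)) x
                (EuclideanSpace.single i (1:ℝ)))
    ↔ (β ≤ 2 - (N:ℝ) ∨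
        ((2:ℝ) - (N:ℝ) < β ∧ p < ((N:ℝ) + β) / ((N:ℝ) + β - 2))) := by
  rw [cond_iff' β p hp]
  have hp1 : (0:ℝ) < p - 1 := by linarith
  constructor
  · rintro ⟨c, hc, α, hα, R, hR, h⟩
    have key : ∀ r : ℝ, 0 < r → r < R →
        c ^ (p-1) * ((r^2 : ℝ) ^ (-(α/2) * p - (-(α/2) - 1))) ≤ α * (α + 2 - (N:ℝ) - β) := by
      intro r hr hrR
      set x : EuclideanSpace ℝ (Fin N) := EuclideanSpace.single (⟨0, by omega⟩ : Fin N) r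
        with hxdef
      have hnorm : ‖x‖ = r := by
        rw [hxdef, EuclideanSpace.norm_single, Real.norm_eq_abs, abs_of_pos hr]
      have hx0 : x ≠ 0 := norm_pos_iff.mp (by rw [hnorm]; exact hr)
      have h' := h x hx0 (by rw [hnorm]; exact hrR)
      rw [reduce' β c α hx0, lhs_eq' c α p hc hx0, hnorm] at h'
      have hQ : (0:ℝ) < r^2 := pow_pos hr 2
      have hq1 : (0:ℝ) < (r^2:ℝ) ^ (-(α/2) - 1) := Real.rpow_pos_of_pos hQ _
      rw [Real.rpow_sub hc, Real.rpow_sub hQ, Real.rpow_one, div_mul_div_comm,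
        div_le_iff₀ (by positivity)]
      nlinarith [h']
    have hK : 0 < α * (α + 2 - (N:ℝ) - β) := by
      have h0 := key (R/2) (by linarith) (by linarith)
      have hQ : (0:ℝ) < (R/2)^2 := by positivity
      have hpos : 0 < c ^ (p-1) * (((R/2)^2 : ℝ) ^ (-(α/2) * p - (-(α/2) - 1))) :=
        mul_pos (Real.rpow_pos_of_pos hc _) (Real.rpow_pos_of_pos hQ _)
      linarith
    have hs : (N:ℝ) + β - 2 < α := by nlinarith
    by_cases hcase : α * (p - 1) ≤ 2
    · nlinarith [mul_pos (sub_pos.mpr hs) hp1]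
    · exfalso
      push_neg at hcase
      have htpos : 0 < α * (p - 1) - 2 := by linarith
      set t := α * (p - 1) - 2 with ht
      set K := α * (α + 2 - (N:ℝ) - β) with hKdef
      set A := c ^ (p-1) / (2 * K) with hA
      have hApos : 0 < A := div_pos (Real.rpow_pos_of_pos hc _) (by linarith)
      set r0 := min (R/2) (A ^ (1/t)) with hr0
      have hr0pos : 0 < r0 := lt_min (by linarith) (Real.rpow_pos_of_pos hApos _)
      have hr0R : r0 < R := lt_of_le_of_lt (min_le_left _ _) (by linarith)
      have hexp : (r0^2 : ℝ) ^ (-(α/2) * p - (-(α/2) - 1)) = r0 ^ (-t) := by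
        rw [← Real.rpow_natCast r0 2, ← Real.rpow_mul hr0pos.le]
        congr 1; push_cast; ring
      have hkey := key r0 hr0pos hr0R
      rw [hexp, Real.rpow_neg hr0pos.le, ← div_eq_mul_inv,
        div_le_iff₀ (Real.rpow_pos_of_pos hr0pos t)] at hkey
      have hr0t : r0 ^ t ≤ A := by
        calc r0 ^ t ≤ (A ^ (1/t)) ^ t :=
              Real.rpow_le_rpow hr0pos.le (min_le_right _ _) htpos.le
          _ = A := by rw [← Real.rpow_mul hApos.le, one_div_mul_cancel htpos.ne',
                Real.rpow_one]
      have hmul : K * r0 ^ t ≤ K * A := mul_le_mul_of_nonneg_left hr0t hK.le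
      have hKne : K ≠ 0 := hK.ne'
      have hKA : K * A = c ^ (p-1) / 2 := by
        rw [hA]; field_simp
      have hcp : 0 < c ^ (p-1) := Real.rpow_pos_of_pos hc _
      linarith
  · intro hcond2
    set α := 2 / (p - 1) with hαdef
    have hα : 0 < α := by positivity
    have hs : (N:ℝ) + β - 2 < α := by rw [hαdef, lt_div_iff₀ hp1]; linarith
    have hK : 0 < α * (α + 2 - (N:ℝ) - β) := mul_pos hα (by linarith)
    refine ⟨(α * (α + 2 - (N:ℝ) - β)) ^ (1/(p-1)), Real.rpow_pos_of_pos hK _,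
      α, hα, 1, one_pos, ?_⟩
    intro x hx hxR
    have hc : (0:ℝ) < (α * (α + 2 - (N:ℝ) - β)) ^ (1/(p-1)) := Real.rpow_pos_of_pos hK _
    rw [reduce' β _ α hx, lhs_eq' _ α p hc hx]
    have hep : -(α/2) * p = -(α/2) - 1 := by
      rw [hαdef]; field_simp; ring
    rw [hep]
    have hcp : ((α * (α + 2 - (N:ℝ) - β)) ^ (1/(p-1))) ^ p
        = ((α * (α + 2 - (N:ℝ) - β)) ^ (1/(p-1))) * (α * (α + 2 - (N:ℝ) - β)) := by
      have h1 : ((α * (α + 2 - (N:ℝ) - β)) ^ (1/(p-1))) ^ (p-1)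
          = α * (α + 2 - (N:ℝ) - β) := by
        rw [← Real.rpow_mul hK.le, one_div_mul_cancel hp1.ne', Real.rpow_one]
      calc ((α * (α + 2 - (N:ℝ) - β)) ^ (1/(p-1))) ^ p
          = ((α * (α + 2 - (N:ℝ) - β)) ^ (1/(p-1))) ^ ((1:ℝ) + (p-1)) := by
            rw [show (1:ℝ) + (p-1) = p by ring]
        _ = ((α * (α + 2 - (N:ℝ) - β)) ^ (1/(p-1))) ^ (1:ℝ)
            * ((α * (α + 2 - (N:ℝ) - β)) ^ (1/(p-1))) ^ (p-1) := Real.rpow_add hc 1 (p-1)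
        _ = _ := by rw [Real.rpow_one, h1]
    rw [hcp]
end
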